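/- Let S consist of the unary signature Δ₀ together with the signatures g_k for all k ≥ 1, and let ⟨S⟩ be the tensor closure of S. Let f ∈ ⟨S⟩ be a signature of arity n and let α ∈ supp(f). (i) If α_i = 0 and α⁺ is obtained from α by changing its i-th bit to 1, then f(α⁺) = f(α)/2 or f(α⁺) = 0. (ii) If α_i = 1 and α⁻ is obtained from α by changing its i-th bit to 0, then f(α⁻) = 2·f(α). -/

import Mathlib

/-- Number of `1`s (Hamming weight) of a Boolean string. -/
def wt1 {n : ℕ} (x : Fin n → Bool) : ℕ := (Finset.univ.filter fun i => x i = true).card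

/-- The tensor product of two signatures: `(x,y) ↦ f(x)·g(y)`. -/
noncomputable def tensorSig {a b : ℕ} (f : (Fin a → Bool) → ℂ) (g : (Fin b → Bool) → ℂ) :
    (Fin (a + b) → Bool) → ℂ :=
  fun x => f (fun i => x (Fin.castAdd b i)) * g (fun j => x (Fin.natAdd a j))

/-- Membership in `S = {Δ₀} ∪ {g_k : k ≥ 1}`: either the unary `Δ₀ = [1,0]`,
or the symmetric arity-`k` signature `g_k` (`k ≥ 1`) with value `2` at Hamming
weight `0`, value `1` at Hamming weight `1`, and value `0` at weight `≥ 2`. -/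
def InS {n : ℕ} (h : (Fin n → Bool) → ℂ) : Prop :=
  (n = 1 ∧ ∀ x, h x = if wt1 x = 0 then 1 else 0) ∨
  (1 ≤ n ∧ ∀ x, h x = if wt1 x = 0 then 2 else if wt1 x = 1 then 1 else 0)

/-- Tensor products of finitely many (at least one) members of `S`. -/
inductive TensorOfS : (m : ℕ) → ((Fin m → Bool) → ℂ) → Prop
  | atom {m : ℕ} {h : (Fin m → Bool) → ℂ} (hs : InS h) : TensorOfS m h
  | tensor {a b : ℕ} {f : (Fin a → Bool) → ℂ} {g : (Fin b → Bool) → ℂ}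
      (hf : TensorOfS a f) (hg : TensorOfS b g) : TensorOfS (a + b) (tensorSig f g)

/-- The tensor closure `⟨S⟩`: signatures that are identically `0` or equal, up
to a nonzero scalar and a permutation of the variables, to a tensor product of
finitely many members of `S`. -/
def InTC {n : ℕ} (f : (Fin n → Bool) → ℂ) : Prop :=
  (∀ x, f x = 0) ∨
  ∃ (c : ℂ), c ≠ 0 ∧ ∃ (σ : Equiv.Perm (Fin n)) (h : (Fin n → Bool) → ℂ),
    TensorOfS n h ∧ ∀ x, f x = c * h (x ∘ σ)

/-!
Every member of `S` has the inheritance property: its support consists of strings of Hamming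
weight at most one (just the zero string for `Δ₀`), on which raising a bit halves the value or
kills it, and lowering a bit doubles it. The property is local to one coordinate, so it passes
to tensor products (the other factor is a constant along that coordinate), and it survives
scaling and permuting the variables.
-/

open Function

lemma wt1_update_true {n : ℕ} (α : Fin n → Bool) {i : Fin n} (hi : α i = false) :
    wt1 (update α i true) = wt1 α + 1 := by
  have hset : Finset.univ.filter (fun j => update α i true j = true)
      = insert i (Finset.univ.filter fun j => α j = true) := by
    ext j
    by_cases hj : j = i <;> simp [update_apply, hj]
  rw [wt1, hset, Finset.card_insert_of_notMem (by simp [hi]), wt1]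

lemma wt1_update_false {n : ℕ} (α : Fin n → Bool) {i : Fin n} (hi : α i = true) :
    wt1 (update α i false) + 1 = wt1 α := by
  have h := wt1_update_true (update α i false) (i := i) (by simp)
  rwa [update_idem, update_eq_self_iff.mpr hi.symm, eq_comm] at h

lemma wt1_pos_of_apply_eq_true {n : ℕ} {α : Fin n → Bool} {i : Fin n} (hi : α i = true) :
    0 < wt1 α :=
  Finset.card_pos.mpr ⟨i, by simp [hi]⟩

def InheritsAt {n : ℕ} (h : (Fin n → Bool) → ℂ) (α : Fin n → Bool) (i : Fin n) : Prop :=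
  (α i = false → h (update α i true) = h α / 2 ∨ h (update α i true) = 0) ∧
  (α i = true → h (update α i false) = 2 * h α)

def HasInheritance {n : ℕ} (h : (Fin n → Bool) → ℂ) : Prop :=
  ∀ α, h α ≠ 0 → ∀ i, InheritsAt h α i

/-- `InheritsAt` only sees the restriction of a signature to the line through `α` in direction
`i`, so it is transported along any identification of lines up to a scalar. -/
lemma InheritsAt.of_update_eq_mul {m n : ℕ} {h : (Fin n → Bool) → ℂ}
    {h' : (Fin m → Bool) → ℂ} {α : Fin n → Bool} {β : Fin m → Bool} {i : Fin n} {j : Fin m}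
    (c : ℂ) (hline : ∀ v, h (update α i v) = c * h' (update β j v)) (hij : α i = β j)
    (hβ : InheritsAt h' β j) : InheritsAt h α i := by
  have hα : h α = c * h' β := by
    have h := hline (α i)
    rwa [update_eq_self, hij, update_eq_self] at h
  refine ⟨fun hi => ?_, fun hi => ?_⟩
  · rcases hβ.1 (hij ▸ hi) with hhalf | hzero
    · left
      rw [hline, hhalf, hα, mul_div_assoc]
    · right
      rw [hline, hzero, mul_zero]
  · rw [hline, hβ.2 (hij ▸ hi), hα, mul_left_comm]

lemma hasInheritance_of_inS {n : ℕ} {h : (Fin n → Bool) → ℂ} (hs : InS h) :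
    HasInheritance h := by
  intro α hα i
  rcases hs with ⟨-, hval⟩ | ⟨-, hval⟩
  · have hw : wt1 α = 0 := by
      by_contra hw
      simp [hval, hw] at hα
    refine ⟨fun hi => Or.inr ?_, fun hi => ?_⟩
    · simp [hval, wt1_update_true α hi]
    · exact absurd hw (wt1_pos_of_apply_eq_true hi).ne'
  · have hw : wt1 α = 0 ∨ wt1 α = 1 := by
      by_contra hw
      rw [not_or] at hw
      simp [hval, hw.1, hw.2] at hα
    refine ⟨fun hi => ?_, fun hi => ?_⟩
    · rw [hval, hval, wt1_update_true α hi]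
      rcases hw with hw | hw <;> simp [hw]
    · have hw1 : wt1 α = 1 := hw.resolve_left (wt1_pos_of_apply_eq_true hi).ne'
      have hw0 : wt1 (update α i false) = 0 := by
        have := wt1_update_false α hi
        omega
      rw [hval, hval, hw0, hw1]
      norm_num

lemma tensorSig_apply {a b : ℕ} (f : (Fin a → Bool) → ℂ) (g : (Fin b → Bool) → ℂ)
    (x : Fin (a + b) → Bool) :
    tensorSig f g x = f (x ∘ Fin.castAdd b) * g (x ∘ Fin.natAdd a) :=
  rfl

lemma castAdd_ne_natAdd {a b : ℕ} (i : Fin a) (j : Fin b) : Fin.castAdd b i ≠ Fin.natAdd a j :=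
  Fin.ne_of_lt (by simp only [Fin.lt_def, Fin.val_castAdd, Fin.val_natAdd]; omega)

lemma HasInheritance.tensorSig {a b : ℕ} {f : (Fin a → Bool) → ℂ} {g : (Fin b → Bool) → ℂ}
    (hf : HasInheritance f) (hg : HasInheritance g) : HasInheritance (tensorSig f g) := by
  intro α hα i
  rw [tensorSig_apply] at hα
  have hαf := left_ne_zero_of_mul hα
  have hαg := right_ne_zero_of_mul hα
  induction i using Fin.addCases with
  | left j =>
    refine (hf _ hαf j).of_update_eq_mul (g (α ∘ Fin.natAdd a)) (fun v => ?_) (by rfl)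
    rw [tensorSig_apply, update_comp_eq_of_injective _ (Fin.castAdd_injective a b),
      update_comp_eq_of_forall_ne _ _ (fun k => (castAdd_ne_natAdd j k).symm), mul_comm]
  | right j =>
    refine (hg _ hαg j).of_update_eq_mul (f (α ∘ Fin.castAdd b)) (fun v => ?_) (by rfl)
    rw [tensorSig_apply, update_comp_eq_of_injective _ (Fin.natAdd_injective b a),
      update_comp_eq_of_forall_ne _ _ (fun k => castAdd_ne_natAdd k j)]

lemma TensorOfS.hasInheritance {m : ℕ} {h : (Fin m → Bool) → ℂ} (th : TensorOfS m h) :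
    HasInheritance h := by
  induction th with
  | atom hs => exact hasInheritance_of_inS hs
  | tensor _ _ ihf ihg => exact ihf.tensorSig ihg

/-- the inheritance property: let `f ∈ ⟨S⟩` and `α ∈ supp(f)`.
(i) If `αᵢ = 0`, then flipping the `i`-th bit to `1` gives `f(α⁺) = f(α)/2` or
`f(α⁺) = 0`.  (ii) If `αᵢ = 1`, then flipping the `i`-th bit to `0` gives
`f(α⁻) = 2·f(α)`. -/
theorem stmt8 {n : ℕ} (f : (Fin n → Bool) → ℂ) (hf : InTC f)
    (α : Fin n → Bool) (hα : f α ≠ 0) (i : Fin n) :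
    (α i = false →
      (f (Function.update α i true) = f α / 2 ∨ f (Function.update α i true) = 0)) ∧
    (α i = true → f (Function.update α i false) = 2 * f α) := by
  rcases hf with hzero | ⟨c, -, σ, h, th, hfh⟩
  · exact absurd (hzero α) hα
  have hh : h (α ∘ σ) ≠ 0 := fun h0 => hα (by rw [hfh, h0, mul_zero])
  refine (th.hasInheritance _ hh (σ.symm i)).of_update_eq_mul c (fun v => ?_) (by simp)
  rw [hfh, update_comp_equiv]
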